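/- arXiv:2301.03683 — 2 statements merged into one kernel-verified Lean document; each statement's English description precedes it below -/
import Mathlib

section
/- Let (g,γ) be a construction pair on an abelian group (X,+). Then for every integer i and all x,y ∈ X, g^{−i}(g^i(x)+g^i(y)) = x + y + ∑_{k∈I(0,3i)} g^{−k}(γ(x,y)). -/
/-- The interval `I(i,j)` of integers: `∅` if `i = j`, `{i,…,j-1}` if `i < j`,
and `{j,…,i-1}` if `j < i`. -/
noncomputable def I (i j : ℤ) : Finset ℤ := Finset.Ico (min i j) (max i j)

/-- A construction pair `(g, γ)` on an abelian group `(X, +)`. -/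
structure IsConstructionPair {X : Type*} [AddCommGroup X]
    (g : Equiv.Perm X) (γ : X → X → X) : Prop where
  symm : ∀ x y, γ x y = γ y x
  alt : ∀ x, γ x x = 0
  add_left : ∀ x y z, γ (x + y) z = γ x z + γ y z
  add_right : ∀ x y z, γ x (y + z) = γ x y + γ x z
  c1 : ∀ x y, g⁻¹ (g x + g y)
      = x + y + γ x y + g⁻¹ (γ x y) + g⁻¹ (g⁻¹ (γ x y))
  c2 : ∀ x y z, γ (γ x y) z = 0
  c3 : ∀ x y, g⁻¹ (γ x y) = γ (g x) y

/-!
By (C2) every `γ x y` lies in the radical of `γ`; by (C1) `g` is additive on sums `w + t` with `t`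
in the radical, and by (C3) `γ (gⁿ x) y = g⁻ⁿ (γ x y)`, so the radical is `g`-stable and
`γ (gⁿ x) (gⁿ y) = g⁻²ⁿ (γ x y)`. Applying (C1) at `gⁿ x, gⁿ y` and then `g⁻ⁿ` shows that passing
from `n` to `n + 1` adds `g^{-3n}, g^{-3n-1}, g^{-3n-2}` of `γ x y` to the left-hand side. Since `γ` is
alternating these elements have order two, so the sum over `I(0, 3n)` changes by the same three
terms also when `n < 0`, where they leave the interval instead of joining it. Both sides agree at
`n = 0`, hence everywhere.
-/

theorem Function.Semiconj.perm_zpow {α β : Type*} {f : α → β} {p : Equiv.Perm α}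
    {q : Equiv.Perm β} (hf : Function.Semiconj f p q) (n : ℤ) :
    Function.Semiconj f ⇑(p ^ n) ⇑(q ^ n) := by
  induction n using Int.induction_on with
  | zero => exact Function.Semiconj.id_right
  | succ n ih =>
    simp only [zpow_add_one, Equiv.Perm.coe_mul]
    exact ih.comp_right hf
  | pred n ih =>
    simp only [zpow_sub_one, Equiv.Perm.coe_mul]
    exact ih.comp_right (hf.inverses_right p.apply_symm_apply q.symm_apply_apply)

lemma sum_I_zero_add_one {M : Type*} [AddCommGroup M] (f : ℤ → M) {m : ℤ}
    (hm : -f m = f m) : ∑ k ∈ I 0 (m + 1), f k = ∑ k ∈ I 0 m, f k + f m := by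
  rcases le_or_gt 0 m with hm0 | hm0
  · rw [I, I, min_eq_left hm0, max_eq_right hm0, min_eq_left (by omega), max_eq_right (by omega),
      Finset.sum_Ico_add_eq_sum_Ico_add_one hm0]
  · rw [I, I, min_eq_right hm0.le, max_eq_left hm0.le, min_eq_right (by omega),
      max_eq_left (by omega), ← Finset.insert_Ico_add_one_left_eq_Ico hm0,
      Finset.sum_insert (by simp)]
    nth_rw 2 [← hm]
    abel

namespace IsConstructionPair

variable {X : Type*} [AddCommGroup X] {g : Equiv.Perm X} {γ : X → X → X}
  (h : IsConstructionPair g γ)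
include h

lemma gamma_zero_right (x : X) : γ x 0 = 0 :=
  (AddMonoidHom.mk' (γ x) (h.add_right x)).map_zero

lemma gamma_neg_right (x y : X) : γ x (-y) = -γ x y :=
  (AddMonoidHom.mk' (γ x) (h.add_right x)).map_neg y

lemma neg_gamma (x y : X) : -γ x y = γ x y := by
  have := h.alt (x + y)
  rw [h.add_left, h.add_right, h.add_right, h.alt, h.alt, h.symm y x, zero_add, add_zero] at this
  exact neg_eq_of_add_eq_zero_left this

def radical : AddSubgroup X where
  carrier := {t | ∀ w, γ w t = 0}
  zero_mem' w := h.gamma_zero_right w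
  add_mem' hs ht w := by rw [h.add_right, hs w, ht w, add_zero]
  neg_mem' ht w := by rw [h.gamma_neg_right, ht w, neg_zero]

lemma gamma_mem_radical (x y : X) : γ x y ∈ h.radical := fun w => by
  rw [h.symm]; exact h.c2 x y w

lemma gamma_zpow_left (n : ℤ) (x y : X) : γ ((g ^ n) x) y = (g ^ (-n)) (γ x y) := by
  have hs : Function.Semiconj (γ · y) ⇑g ⇑g⁻¹ := fun x => (h.c3 x y).symm
  rw [← inv_zpow']
  exact hs.perm_zpow n x

lemma zpow_apply_zero (n : ℤ) : (g ^ n) (0 : X) = 0 := by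
  simpa [h.gamma_zero_right] using (h.gamma_zpow_left (-n) 0 0).symm

lemma zpow_apply_mem_radical {t : X} (ht : t ∈ h.radical) (n : ℤ) : (g ^ n) t ∈ h.radical :=
  fun w => by rw [h.symm, h.gamma_zpow_left, h.symm, ht w, h.zpow_apply_zero]

lemma apply_add_of_mem_radical {t : X} (ht : t ∈ h.radical) (w : X) :
    g (w + t) = g w + g t := by
  have hinv0 : g⁻¹ (0 : X) = 0 := by simpa using h.zpow_apply_zero (-1)
  have hc1 := h.c1 w t
  rw [ht w, hinv0, hinv0, add_zero, add_zero, add_zero, Equiv.Perm.inv_eq_iff_eq] at hc1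
  exact hc1.symm

lemma inv_apply_add_of_mem_radical {t : X} (ht : t ∈ h.radical) (w : X) :
    g⁻¹ (w + t) = g⁻¹ w + g⁻¹ t := by
  have ht' : g⁻¹ t ∈ h.radical := by simpa using h.zpow_apply_mem_radical ht (-1)
  rw [Equiv.Perm.inv_eq_iff_eq, h.apply_add_of_mem_radical ht']
  simp

lemma zpow_apply_add_of_mem_radical (n : ℤ) {t : X} (ht : t ∈ h.radical) (w : X) :
    (g ^ n) (w + t) = (g ^ n) w + (g ^ n) t := by
  induction n using Int.induction_on generalizing w t with
  | zero => rfl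
  | succ n ih =>
    have ht' : g t ∈ h.radical := by simpa using h.zpow_apply_mem_radical ht 1
    simp only [zpow_add_one, Equiv.Perm.mul_apply, h.apply_add_of_mem_radical ht, ih ht']
  | pred n ih =>
    have ht' : g⁻¹ t ∈ h.radical := by simpa using h.zpow_apply_mem_radical ht (-1)
    simp only [zpow_sub_one, Equiv.Perm.mul_apply, h.inv_apply_add_of_mem_radical ht, ih ht']

lemma neg_zpow_apply_gamma (n : ℤ) (x y : X) : -(g ^ n) (γ x y) = (g ^ n) (γ x y) := by
  rw [← neg_neg n, ← h.gamma_zpow_left, h.neg_gamma]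

lemma conj_add_zpow_add_one (n : ℤ) (x y : X) :
    (g ^ (-(n + 1))) ((g ^ (n + 1)) x + (g ^ (n + 1)) y)
      = (g ^ (-n)) ((g ^ n) x + (g ^ n) y) + ((g ^ (-(3 * n))) (γ x y)
        + (g ^ (-(3 * n + 1))) (γ x y) + (g ^ (-(3 * n + 2))) (γ x y)) := by
  have comp : ∀ (a b : ℤ) (z : X), (g ^ a) ((g ^ b) z) = (g ^ (a + b)) z := fun a b z => by
    rw [zpow_add, Equiv.Perm.mul_apply]
  have hγ : γ ((g ^ n) x) ((g ^ n) y) = (g ^ (-(2 * n))) (γ x y) := by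
    rw [h.gamma_zpow_left, h.symm, h.gamma_zpow_left, h.symm, comp]
    ring_nf
  have hmem : ∀ m : ℤ, (g ^ m) (γ x y) ∈ h.radical := fun m =>
    h.zpow_apply_mem_radical (h.gamma_mem_radical x y) m
  rw [show g ^ (n + 1) = g * g ^ n by group, show g ^ (-(n + 1)) = g ^ (-n) * g⁻¹ by group,
    Equiv.Perm.mul_apply, Equiv.Perm.mul_apply, Equiv.Perm.mul_apply, h.c1, hγ]
  simp only [← zpow_neg_one, comp]
  rw [h.zpow_apply_add_of_mem_radical _ (hmem _), h.zpow_apply_add_of_mem_radical _ (hmem _),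
    h.zpow_apply_add_of_mem_radical _ (hmem _), comp, comp, comp]
  ring_nf
  abel

lemma sum_I_three_mul_add_one (n : ℤ) (x y : X) :
    ∑ k ∈ I 0 (3 * (n + 1)), (g ^ (-k)) (γ x y)
      = ∑ k ∈ I 0 (3 * n), (g ^ (-k)) (γ x y) + ((g ^ (-(3 * n))) (γ x y)
        + (g ^ (-(3 * n + 1))) (γ x y) + (g ^ (-(3 * n + 2))) (γ x y)) := by
  have torsion : ∀ m : ℤ, -(g ^ (-m)) (γ x y) = (g ^ (-m)) (γ x y) :=
    fun m => h.neg_zpow_apply_gamma _ x y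
  rw [show 3 * (n + 1) = 3 * n + 1 + 1 + 1 by ring, sum_I_zero_add_one _ (torsion _),
    sum_I_zero_add_one _ (torsion _), sum_I_zero_add_one _ (torsion _),
    show 3 * n + 1 + 1 = 3 * n + 2 by ring]
  abel

end IsConstructionPair

theorem stmt_3 {X : Type*} [AddCommGroup X] (g : Equiv.Perm X) (γ : X → X → X)
    (h : IsConstructionPair g γ) (i : ℤ) (x y : X) :
    (g ^ (-i)) ((g ^ i) x + (g ^ i) y)
      = x + y + ∑ k ∈ I 0 (3 * i), (g ^ (-k)) (γ x y) := by
  induction i using Int.induction_on with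
  | zero => simp [I]
  | succ n ih => rw [h.conj_add_zpow_add_one, ih, h.sum_I_three_mul_add_one, add_assoc]
  | pred n ih =>
    have hL := h.conj_add_zpow_add_one (-n - 1) x y
    have hR := h.sum_I_three_mul_add_one (-n - 1) x y
    rw [sub_add_cancel] at hL hR
    rw [ih, hR, ← add_assoc] at hL
    exact (add_right_cancel hL).symm
end

section
/- Let (X,+) be an abelian group and f a semiautomorphism of (X,+) such that for every x ∈ X the map μ_x : X → X, μ_x(z) = f⁻¹(f(z)+f(x))−x, is additive. Define x⊕y = f⁻¹(f(x)+f(y)). Assume moreover that −f³(x) + f(f²(x) + f⁻¹(z)) = f⁻¹(f(z−x)+f(x)) for all x,z ∈ X. Then f⁻¹(μ_x(f(z))) = μ_{f²(x)}(z) for all x,z ∈ X, and each μ_x is an automorphism of (X,⊕), i.e. μ_x(y⊕z) = μ_x(y) ⊕ μ_x(z) for all x,y,z ∈ X. -/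
/-!
Writing `x = f² x'`, the first identity says that `μ_x` is `μ_{x'}` conjugated by `f`. Since
`f` carries `⊕` to `+` and `μ_{x'}` is additive, the conjugate `μ_x` preserves `⊕`.
The first identity itself follows by comparing the values of `w ↦ f (w - x)` at both sides:
the Jordan identity `f (x + y + x) = f x + f y + f x` gives `f (μ_x w - x) = f w - f x`, and the
extra hypothesis evaluates the other side.
-/

section Semiautomorphism

theorem map_neg_of_map_add_add_self {X : Type*} [AddGroup X] {f : X → X}
    (hf : ∀ x y, f (x + y + x) = f x + f y + f x) (x : X) : f (-x) = -f x := by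
  have h : f (-x) + f x + f (-x) = 0 + f (-x) := by
    rw [← hf, neg_add_cancel, zero_add, zero_add]
  exact neg_eq_of_add_eq_zero_left (add_right_cancel h) |>.symm

variable {X : Type*} [AddCommGroup X] {f : X ≃ X}
  (hf : ∀ x y, f (x + y + x) = f x + f y + f x)
  {μ : X → X → X} (hμ : ∀ x z, μ x z = f.symm (f z + f x) - x)
include hf hμ

theorem apply_mu_sub (x w : X) : f (μ x w - x) = f w - f x := by
  have h := hf (-x) (f.symm (f w + f x))
  rw [map_neg_of_map_add_add_self hf, f.apply_symm_apply] at h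
  rw [hμ, show f.symm (f w + f x) - x - x = -x + f.symm (f w + f x) + -x by abel, h]
  abel

theorem symm_mu_apply
    (hextra : ∀ x z, -(f (f (f x))) + f (f (f x) + f.symm z) = f.symm (f (z - x) + f x))
    (x z : X) : f.symm (μ x (f z)) = μ (f (f x)) z := by
  rw [Equiv.symm_apply_eq]
  have hfz : f (f z) = f (f (μ (f (f x)) z) - x) + f x := by
    have hadd : f (f x) + μ (f (f x)) z = f.symm (f z + f (f (f x))) := by
      rw [hμ, add_sub_cancel]
    have h := hextra x (f (μ (f (f x)) z))
    rw [f.symm_apply_apply, hadd, f.apply_symm_apply, neg_add_cancel_comm_assoc] at h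
    rw [h, f.apply_symm_apply]
  have hsub : f (μ x (f z) - x) = f (f (μ (f (f x)) z) - x) := by
    rw [apply_mu_sub hf hμ, hfz, add_sub_cancel_right]
  exact sub_left_injective (f.injective hsub)

theorem mu_symm_add_apply
    (hextra : ∀ x z, -(f (f (f x))) + f (f (f x) + f.symm z) = f.symm (f (z - x) + f x))
    (hμadd : ∀ x a b, μ x (a + b) = μ x a + μ x b) (x y z : X) :
    μ x (f.symm (f y + f z)) = f.symm (f (μ x y) + f (μ x z)) := by
  obtain ⟨x', rfl⟩ : ∃ x', f (f x') = x := ⟨f.symm (f.symm x), by simp⟩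
  simp only [← symm_mu_apply hf hμ hextra, f.apply_symm_apply, hμadd]

end Semiautomorphism

theorem stmt_16_general {X : Type*} [AddCommGroup X] (f : Equiv.Perm X)
    (hf : ∀ x y : X, f (x + y + x) = f x + f y + f x)
    (μ : X → X → X)
    (hμ : ∀ x z : X, μ x z = f⁻¹ (f z + f x) - x)
    (hμadd : ∀ x a b : X, μ x (a + b) = μ x a + μ x b)
    (op : X → X → X)
    (hop : ∀ x y : X, op x y = f⁻¹ (f x + f y))
    (hextra : ∀ x z : X,
      -(f (f (f x))) + f (f (f x) + f⁻¹ z) = f⁻¹ (f (z - x) + f x)) :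
    (∀ x z : X, f⁻¹ (μ x (f z)) = μ (f (f x)) z) ∧
    (∀ x y z : X, μ x (op y z) = op (μ x y) (μ x z)) := by
  simp only [Equiv.Perm.coe_inv] at hμ hop hextra ⊢
  refine ⟨symm_mu_apply hf hμ hextra, fun x y z => ?_⟩
  simp only [hop, mu_symm_add_apply hf hμ hextra hμadd]

theorem stmt_16 {X : Type*} [AddCommGroup X] (f : Equiv.Perm X)
    (hf0 : f 0 = 0)
    (hf : ∀ x y : X, f (x + y + x) = f x + f y + f x)
    (μ : X → X → X)
    (hμ : ∀ x z : X, μ x z = f⁻¹ (f z + f x) - x)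
    (hμadd : ∀ x a b : X, μ x (a + b) = μ x a + μ x b)
    (op : X → X → X)
    (hop : ∀ x y : X, op x y = f⁻¹ (f x + f y))
    (hextra : ∀ x z : X,
      -(f (f (f x))) + f (f (f x) + f⁻¹ z) = f⁻¹ (f (z - x) + f x)) :
    (∀ x z : X, f⁻¹ (μ x (f z)) = μ (f (f x)) z) ∧
    (∀ x y z : X, μ x (op y z) = op (μ x y) (μ x z)) :=
  stmt_16_general f hf μ hμ hμadd op hop hextra
end
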